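/- arXiv:1701.01125 — 11 statements merged into one kernel-verified Lean document; each statement's English description precedes it below -/
import Mathlib

section
/- Let L ≥ 1 be an integer, let η : {1,…,L} → {−1,+1} be a sign sequence, and let a₀, a₁, …, a_{L+1} be complex numbers satisfying the sign recurrence for η with the boundary conditions a₀ = a_{L+1} = 1. Then there is at most one index i with 0 ≤ i ≤ L+1 such that a_i = 0. -/
private lemma sign_rec_aux (L : ℕ) (hL : 1 ≤ L) (η : ℕ → ℝ)
    (hη : ∀ i, 1 ≤ i → i ≤ L → η i = 1 ∨ η i = -1)
    (a : ℕ → ℂ)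
    (hrec : ∀ i, 1 ≤ i → i ≤ L → (η i : ℂ) * a i = (a (i - 1) + a (i + 1)) / 2)
    (ha0 : a 0 = 1) (haL : a (L + 1) = 1)
    (i j : ℕ) (hj : j ≤ L + 1) (hai : a i = 0) (haj : a j = 0)
    (hij : i < j) : False := by
  -- i ≥ 1 and j ≤ L
  have hi1 : 1 ≤ i := by
    by_contra h
    have : i = 0 := by omega
    rw [this, ha0] at hai; exact one_ne_zero hai
  have hjL : j ≤ L := by
    by_contra h
    have : j = L + 1 := by omega
    rw [this, haL] at haj; exact one_ne_zero haj
  -- midpoint convexity of norms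
  have conv : ∀ n, n + 1 ≤ L → 2 * ‖a (n+1)‖ ≤ ‖a n‖ + ‖a (n+2)‖ := by
    intro n hn
    have h := hrec (n+1) (by omega) hn
    have hsum : a n + a (n+2) = 2 * (η (n+1) : ℂ) * a (n+1) := by
      have : (n+1) - 1 = n := by omega
      rw [this] at h
      field_simp at h
      linear_combination -h
    have heta : ‖(η (n+1) : ℂ)‖ = 1 := by
      rcases hη (n+1) (by omega) hn with h1 | h1 <;> simp [h1]
    calc 2 * ‖a (n+1)‖ = ‖2 * (η (n+1) : ℂ) * a (n+1)‖ := by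
            rw [norm_mul, norm_mul, heta]; simp [mul_comm]
      _ = ‖a n + a (n+2)‖ := by rw [hsum]
      _ ≤ ‖a n‖ + ‖a (n+2)‖ := norm_add_le _ _
  -- differences are nondecreasing
  have dmono : ∀ m n, m ≤ n → n ≤ L → ‖a (m+1)‖ - ‖a m‖ ≤ ‖a (n+1)‖ - ‖a n‖ := by
    intro m n hmn hnL
    induction n with
    | zero =>
      have hm0 : m = 0 := by omega
      subst hm0; exact le_rfl
    | succ k ih =>
      rcases Nat.lt_or_ge m (k+1) with h | h
      · have hk := ih (by omega) (by omega)
        have hc := conv k (by omega)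
        have : ‖a (k+1)‖ - ‖a k‖ ≤ ‖a (k+2)‖ - ‖a (k+1)‖ := by linarith
        linarith
      · have : m = k + 1 := by omega
        simp [this]
  -- lower bound: ‖a (i+k)‖ ≥ k * ‖a (i+1)‖ for i+k ≤ j
  have lower : ∀ k, i + k ≤ j → (k : ℝ) * ‖a (i+1)‖ ≤ ‖a (i+k)‖ := by
    intro k
    induction k with
    | zero => intro _; simp
    | succ m ih =>
      intro hm
      have h1 := ih (by omega)
      have h2 : ‖a (i+1)‖ - ‖a i‖ ≤ ‖a (i+m+1)‖ - ‖a (i+m)‖ :=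
        dmono i (i+m) (by omega) (by omega)
      have hai' : ‖a i‖ = 0 := by rw [hai]; simp
      have : (i + (m+1)) = (i + m) + 1 := by omega
      rw [this]
      push_cast
      linarith
  have hjz : ‖a j‖ = 0 := by rw [haj]; simp
  have hkey := lower (j - i) (by omega)
  have hji : (i + (j - i)) = j := by omega
  rw [hji, hjz] at hkey
  have hc : ‖a (i+1)‖ ≤ 0 := by
    have hpos : (1 : ℝ) ≤ ((j - i : ℕ) : ℝ) := by
      have : 1 ≤ j - i := by omega
      exact_mod_cast this
    nlinarith [norm_nonneg (a (i+1))]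
  have hai1 : a (i+1) = 0 := by
    have := norm_nonneg (a (i+1))
    have : ‖a (i+1)‖ = 0 := le_antisymm hc this
    exact norm_eq_zero.mp this
  -- descend: two consecutive zeros propagate down
  have descent : ∀ m, m ≤ i → a (i - m) = 0 ∧ a (i - m + 1) = 0 := by
    intro m
    induction m with
    | zero => intro _; simpa using ⟨hai, hai1⟩
    | succ k ih =>
      intro hk
      obtain ⟨h1, h2⟩ := ih (by omega)
      set p := i - k with hp
      have hp1 : 1 ≤ p := by omega
      have hpL : p ≤ L := by omega
      have h := hrec p hp1 hpL
      rw [h1, h2] at h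
      have h0 : a (p - 1) = 0 := by
        field_simp at h
        simpa using h.symm
      constructor
      · have : i - (k+1) = p - 1 := by omega
        rw [this]; exact h0
      · have : i - (k+1) + 1 = p := by omega
        rw [this]; exact h1
  obtain ⟨h1, _⟩ := descent i le_rfl
  simp at h1
  rw [h1] at ha0
  exact one_ne_zero ha0.symm

/-- If complex numbers `a 0, …, a (L+1)` satisfy the sign recurrence for a sign
sequence `η` with boundary values `a 0 = a (L+1) = 1`, then at most one of the
`a i` (for `0 ≤ i ≤ L+1`) can vanish. -/
theorem sign_recurrence_at_most_one_zero (L : ℕ) (hL : 1 ≤ L) (η : ℕ → ℝ)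
    (hη : ∀ i, 1 ≤ i → i ≤ L → η i = 1 ∨ η i = -1)
    (a : ℕ → ℂ)
    (hrec : ∀ i, 1 ≤ i → i ≤ L → (η i : ℂ) * a i = (a (i - 1) + a (i + 1)) / 2)
    (ha0 : a 0 = 1) (haL : a (L + 1) = 1) :
    ∀ i j, i ≤ L + 1 → j ≤ L + 1 → a i = 0 → a j = 0 → i = j := by
  intro i j hi hj hai haj
  rcases lt_trichotomy i j with h | h | h
  · exact absurd (sign_rec_aux L hL η hη a hrec ha0 haL i j hj hai haj h) id
  · exact h
  · exact absurd (sign_rec_aux L hL η hη a hrec ha0 haL j i hi haj hai h) id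
end

section
/- Let m ≥ 0 be an integer, let L = 4m+3, and let η : {1,…,2m+2} → {−1,+1}. Suppose b₀, b₁, …, b_{2m+2} are real numbers with b₀ = 1, b_{2m+2} = 0, and η(i)·b_i = (b_{i−1} + b_{i+1})/2 for every 1 ≤ i ≤ 2m+1. Define a_i = b_i for 0 ≤ i ≤ 2m+2 and a_i = (−1)^i · b_{L+1−i} for 2m+2 < i ≤ L+1, and define η′(i) = η(i) for 1 ≤ i ≤ 2m+2 and η′(i) = −η(L+1−i) for 2m+2 < i ≤ L. Then a₀ = 1, a_{L+1} = 1, a_{2m+2} = 0, and the sequence a₀, …, a_{L+1} satisfies the sign recurrence for η′, i.e. η′(i)·a_i = (a_{i−1} + a_{i+1})/2 for every 1 ≤ i ≤ L. -/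
/-- The reflection construction: for `L = 4m+3`, from a solution `b` of the sign
recurrence on `{1,…,2m+1}` with `b 0 = 1` and `b (2m+2) = 0`, the reflected
sequence `a` satisfies the sign recurrence for the reflected sign sequence `η′`
on `{1,…,L}` with `a 0 = a (L+1) = 1` and `a (2m+2) = 0`. -/
theorem sign_recurrence_reflection (m L : ℕ) (hL : L = 4 * m + 3)
    (η : ℕ → ℝ) (b : ℕ → ℝ)
    (hη : ∀ i, 1 ≤ i → i ≤ 2 * m + 2 → η i = 1 ∨ η i = -1)
    (hb0 : b 0 = 1) (hbmid : b (2 * m + 2) = 0)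
    (hrec : ∀ i, 1 ≤ i → i ≤ 2 * m + 1 → η i * b i = (b (i - 1) + b (i + 1)) / 2)
    (a : ℕ → ℝ) (η' : ℕ → ℝ)
    (ha1 : ∀ i, i ≤ 2 * m + 2 → a i = b i)
    (ha2 : ∀ i, 2 * m + 2 < i → i ≤ L + 1 → a i = (-1 : ℝ) ^ i * b (L + 1 - i))
    (hη'1 : ∀ i, 1 ≤ i → i ≤ 2 * m + 2 → η' i = η i)
    (hη'2 : ∀ i, 2 * m + 2 < i → i ≤ L → η' i = -η (L + 1 - i)) :
    a 0 = 1 ∧ a (L + 1) = 1 ∧ a (2 * m + 2) = 0 ∧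
      ∀ i, 1 ≤ i → i ≤ L → η' i * a i = (a (i - 1) + a (i + 1)) / 2 := by
  subst hL
  refine ⟨?_, ?_, ?_, ?_⟩
  · rw [ha1 0 (by omega), hb0]
  · rw [ha2 (4 * m + 3 + 1) (by omega) le_rfl]
    have h1 : 4 * m + 3 + 1 - (4 * m + 3 + 1) = 0 := by omega
    have h2 : (-1 : ℝ) ^ (4 * m + 3 + 1) = 1 :=
      Even.neg_one_pow ⟨2 * m + 2, by ring⟩
    rw [h1, h2, hb0, one_mul]
  · rw [ha1 _ le_rfl, hbmid]
  · intro i hi1 hiL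
    rcases lt_trichotomy i (2 * m + 2) with hc | hc | hc
    · -- left half: direct
      rw [hη'1 i hi1 (by omega), ha1 i (by omega), ha1 (i - 1) (by omega),
        ha1 (i + 1) (by omega)]
      exact hrec i hi1 (by omega)
    · -- middle site
      subst hc
      have hnext : a (2 * m + 2 + 1) = - b (2 * m + 1) := by
        rw [ha2 (2 * m + 2 + 1) (by omega) (by omega)]
        have h1 : 4 * m + 3 + 1 - (2 * m + 2 + 1) = 2 * m + 1 := by omega
        have h2 : (-1 : ℝ) ^ (2 * m + 2 + 1) = -1 :=
          Odd.neg_one_pow ⟨m + 1, by ring⟩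
        rw [h1, h2]; ring
      have hprev : a (2 * m + 2 - 1) = b (2 * m + 1) := by
        have h1 : 2 * m + 2 - 1 = 2 * m + 1 := by omega
        rw [h1, ha1 (2 * m + 1) (by omega)]
      rw [ha1 _ le_rfl, hbmid, hnext, hprev]
      ring
    · -- reflected half
      have hj : 1 ≤ 4 * m + 3 + 1 - i ∧ 4 * m + 3 + 1 - i ≤ 2 * m + 1 := by omega
      set j := 4 * m + 3 + 1 - i with hjdef
      have hai : a i = (-1 : ℝ) ^ i * b j := ha2 i hc (by omega)
      have hanext : a (i + 1) = (-1 : ℝ) ^ (i + 1) * b (j - 1) := by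
        rw [ha2 (i + 1) (by omega) (by omega)]
        have h1 : 4 * m + 3 + 1 - (i + 1) = j - 1 := by omega
        rw [h1]
      have haprev : a (i - 1) = (-1 : ℝ) ^ (i + 1) * b (j + 1) := by
        rcases Nat.lt_or_ge (2 * m + 2) (i - 1) with h | h
        · rw [ha2 (i - 1) h (by omega)]
          have h1 : 4 * m + 3 + 1 - (i - 1) = j + 1 := by omega
          have h2 : (-1 : ℝ) ^ (i - 1) = (-1 : ℝ) ^ (i + 1) := by
            have : i - 1 + 2 = i + 1 := by omega
            rw [← this, pow_add]; norm_num
          rw [h1, h2]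
        · have hi23 : i = 2 * m + 3 := by omega
          have h1 : i - 1 = 2 * m + 2 := by omega
          have h2 : j + 1 = 2 * m + 2 := by omega
          rw [h1, ha1 (2 * m + 2) le_rfl, h2]
          have h3 : (-1 : ℝ) ^ (i + 1) = 1 := by
            rw [hi23]; exact Even.neg_one_pow ⟨m + 2, by ring⟩
          rw [h3, one_mul]
      have hη'i : η' i = -η j := hη'2 i hc hiL
      have hrecj : η j * b j = (b (j - 1) + b (j + 1)) / 2 := hrec j hj.1 hj.2
      rw [hη'i, hai, hanext, haprev]
      have hsign : (-1 : ℝ) ^ (i + 1) = -(-1 : ℝ) ^ i := by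
        rw [pow_succ]; ring
      rw [hsign]
      calc -η j * ((-1 : ℝ) ^ i * b j)
          = -(-1 : ℝ) ^ i * (η j * b j) := by ring
        _ = -(-1 : ℝ) ^ i * ((b (j - 1) + b (j + 1)) / 2) := by rw [hrecj]
        _ = (-(-1 : ℝ) ^ i * b (j + 1) + -(-1 : ℝ) ^ i * b (j - 1)) / 2 := by ring
end

section
/- Let k ≥ 1 be an integer and let η : {1,…,k} → {−1,+1} be any sign sequence. Then there exist unique real numbers b₀, b₁, …, b_{k+1} such that b₀ = 1, b_{k+1} = 0, and η(i)·b_i = (b_{i−1} + b_{i+1})/2 for every 1 ≤ i ≤ k. -/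
/-!
Read from left to right, the recurrence `η i * b i = (b (i - 1) + b (i + 1)) / 2` determines
`b (i + 1) = 2 * η i * b i - b (i - 1)`, so a solution is fixed by `b 0` and `b 1`, and depends
linearly on them: `b = b 0 • u + b 1 • v` for the solutions `u`, `v` started at `(1, 0)` and `(0, 1)`.
The condition `b (k + 1) = 0` is then one linear equation for `b 1`, with coefficient `v (k + 1)`.
Since `|η i| = 1`, the triangle inequality gives `|v (n + 1)| ≥ 2 |v n| - |v (n - 1)|`, so `|v n|`
grows by at least one at every step; hence `v (k + 1) ≠ 0` and `b 1` is uniquely determined.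
-/

namespace SignRecurrence

section CommRing

variable {R : Type*} [CommRing R] (η : ℕ → R)

def forwardSol (c₀ c₁ : R) : ℕ → R
  | 0 => c₀
  | 1 => c₁
  | n + 2 => 2 * η (n + 1) * forwardSol c₀ c₁ (n + 1) - forwardSol c₀ c₁ n

@[simp]
theorem forwardSol_zero (c₀ c₁ : R) : forwardSol η c₀ c₁ 0 = c₀ := rfl

@[simp]
theorem forwardSol_one (c₀ c₁ : R) : forwardSol η c₀ c₁ 1 = c₁ := rfl

@[simp]
theorem forwardSol_add_two (c₀ c₁ : R) (n : ℕ) :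
    forwardSol η c₀ c₁ (n + 2) =
      2 * η (n + 1) * forwardSol η c₀ c₁ (n + 1) - forwardSol η c₀ c₁ n := rfl

theorem forwardSol_eq_add (c₀ c₁ : R) (n : ℕ) :
    forwardSol η c₀ c₁ n = c₀ * forwardSol η 1 0 n + c₁ * forwardSol η 0 1 n := by
  induction n using Nat.strong_induction_on with
  | _ n ih =>
    match n with
    | 0 => simp
    | 1 => simp
    | m + 2 =>
      simp only [forwardSol_add_two, ih (m + 1) (by omega), ih m (by omega)]
      ring

theorem forwardSol_sub_one_add_forwardSol_add_one (c₀ c₁ : R) {i : ℕ} (hi : 1 ≤ i) :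
    forwardSol η c₀ c₁ (i - 1) + forwardSol η c₀ c₁ (i + 1) =
      2 * η i * forwardSol η c₀ c₁ i := by
  obtain ⟨n, rfl⟩ : ∃ n, i = n + 1 := ⟨i - 1, by omega⟩
  simp only [Nat.add_sub_cancel, forwardSol_add_two]
  ring

theorem eq_forwardSol_of_sub_one_add_add_one {b : ℕ → R} {k : ℕ}
    (hb : ∀ i, 1 ≤ i → i ≤ k → b (i - 1) + b (i + 1) = 2 * η i * b i) :
    ∀ n, n ≤ k + 1 → b n = forwardSol η (b 0) (b 1) n := by
  intro n
  induction n using Nat.strong_induction_on with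
  | _ n ih =>
    intro hn
    match n with
    | 0 => rfl
    | 1 => rfl
    | m + 2 =>
      have hrec := hb (m + 1) (by omega) (by omega)
      rw [Nat.add_sub_cancel] at hrec
      rw [forwardSol_add_two, ← ih (m + 1) (by omega) (by omega), ← ih m (by omega) (by omega)]
      exact eq_sub_of_add_eq' hrec

end CommRing

section Ordered

variable {K : Type*} [Field K] [LinearOrder K] [IsStrictOrderedRing K] {η : ℕ → K} {k : ℕ}

theorem abs_forwardSol_zero_one_add_one_le (hη : ∀ i, 1 ≤ i → i ≤ k → η i = 1 ∨ η i = -1) :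
    ∀ n, n ≤ k → |forwardSol η 0 1 n| + 1 ≤ |forwardSol η 0 1 (n + 1)| := by
  intro n
  induction n with
  | zero => simp
  | succ n ih =>
    intro hn
    have hstep := ih (by omega)
    have habs : |2 * η (n + 1) * forwardSol η 0 1 (n + 1)| = 2 * |forwardSol η 0 1 (n + 1)| := by
      rcases hη (n + 1) (by omega) hn with h | h <;> simp [h, abs_mul]
    calc |forwardSol η 0 1 (n + 1)| + 1
        ≤ 2 * |forwardSol η 0 1 (n + 1)| - |forwardSol η 0 1 n| := by linarith
      _ ≤ |forwardSol η 0 1 (n + 2)| := by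
        rw [forwardSol_add_two, ← habs]
        exact abs_sub_abs_le_abs_sub _ _

theorem forwardSol_zero_one_ne_zero (hη : ∀ i, 1 ≤ i → i ≤ k → η i = 1 ∨ η i = -1) :
    forwardSol η 0 1 (k + 1) ≠ 0 := by
  have h := abs_forwardSol_zero_one_add_one_le hη k le_rfl
  rw [← abs_pos]
  linarith [abs_nonneg (forwardSol η 0 1 k)]

end Ordered

end SignRecurrence

theorem sign_recurrence_exists_unique_left_one_right_zero_general (k : ℕ)
    (η : ℕ → ℝ) (hη : ∀ i, 1 ≤ i → i ≤ k → η i = 1 ∨ η i = -1) :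
    ∃ b : ℕ → ℝ,
      (b 0 = 1 ∧ b (k + 1) = 0 ∧
        ∀ i, 1 ≤ i → i ≤ k → η i * b i = (b (i - 1) + b (i + 1)) / 2) ∧
      ∀ b' : ℕ → ℝ,
        (b' 0 = 1 ∧ b' (k + 1) = 0 ∧
          ∀ i, 1 ≤ i → i ≤ k → η i * b' i = (b' (i - 1) + b' (i + 1)) / 2) →
        ∀ i, i ≤ k + 1 → b' i = b i := by
  have hB := SignRecurrence.forwardSol_zero_one_ne_zero hη
  obtain ⟨t, ht⟩ : ∃ t, t * SignRecurrence.forwardSol η 0 1 (k + 1) =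
      -SignRecurrence.forwardSol η 1 0 (k + 1) :=
    ⟨_, div_mul_cancel₀ _ hB⟩
  refine ⟨SignRecurrence.forwardSol η 1 t, ⟨rfl, ?_, fun i hi _ => ?_⟩, ?_⟩
  · rw [SignRecurrence.forwardSol_eq_add, one_mul, ht, add_neg_cancel]
  · linarith [SignRecurrence.forwardSol_sub_one_add_forwardSol_add_one η 1 t hi]
  · rintro b' ⟨hb0, hbk, hrec⟩ i hi
    have hb' := SignRecurrence.eq_forwardSol_of_sub_one_add_add_one η (b := b')
      (fun i h₁ h₂ => by linarith [hrec i h₁ h₂])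
    have h1 : b' 1 = t := by
      have hend := hb' (k + 1) le_rfl
      rw [hbk, hb0, SignRecurrence.forwardSol_eq_add, one_mul] at hend
      exact mul_right_cancel₀ hB (by linarith)
    rw [hb' i hi, hb0, h1]

/-- For any sign sequence `η : {1,…,k} → {−1,+1}` there exist unique real numbers
`b 0, …, b (k+1)` with `b 0 = 1`, `b (k+1) = 0`, satisfying the sign recurrence. -/
theorem sign_recurrence_exists_unique_left_one_right_zero (k : ℕ) (hk : 1 ≤ k)
    (η : ℕ → ℝ) (hη : ∀ i, 1 ≤ i → i ≤ k → η i = 1 ∨ η i = -1) :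
    ∃ b : ℕ → ℝ,
      (b 0 = 1 ∧ b (k + 1) = 0 ∧
        ∀ i, 1 ≤ i → i ≤ k → η i * b i = (b (i - 1) + b (i + 1)) / 2) ∧
      ∀ b' : ℕ → ℝ,
        (b' 0 = 1 ∧ b' (k + 1) = 0 ∧
          ∀ i, 1 ≤ i → i ≤ k → η i * b' i = (b' (i - 1) + b' (i + 1)) / 2) →
        ∀ i, i ≤ k + 1 → b' i = b i :=
  sign_recurrence_exists_unique_left_one_right_zero_general k η hη
end

section
/- Let L ≥ 1 be an integer and let η : {1,…,L} → {−1,+1} be any sign sequence. Then there exist unique real numbers a₀, a₁, …, a_{L+1} satisfying the sign recurrence for η together with the boundary conditions a₀ = a_{L+1} = 1. -/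
/-!
Rewritten as `a (i + 1) = 2 η i a i - a (i - 1)`, the recurrence determines `a` from `a 0` and
`a 1`, and by linearity `a (L + 1)` is an affine function of `a 1` whose slope is the value at
`L + 1` of the solution starting `0, 1`. When `|η i| ≥ 1` that solution grows in absolute value by
at least one at each step, since `|2 η b - c| ≥ 2 |b| - |c| ≥ |b| + 1`, so the slope is nonzero
and exactly one value of `a 1` gives `a (L + 1) = 1`.
-/

def signRecSeq (η : ℕ → ℝ) (x y : ℝ) : ℕ → ℝ
  | 0 => x
  | 1 => y
  | n + 2 => 2 * η (n + 1) * signRecSeq η x y (n + 1) - signRecSeq η x y n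

namespace signRecSeq

variable (η : ℕ → ℝ) (x y : ℝ)

theorem rec {i : ℕ} (hi : 1 ≤ i) :
    η i * signRecSeq η x y i = (signRecSeq η x y (i - 1) + signRecSeq η x y (i + 1)) / 2 := by
  obtain ⟨n, rfl⟩ : ∃ n, i = n + 1 := ⟨i - 1, by omega⟩
  simp only [Nat.add_sub_cancel, signRecSeq]
  ring

theorem eq_add_mul (n : ℕ) :
    signRecSeq η x y n = signRecSeq η x 0 n + y * signRecSeq η 0 1 n := by
  induction n using Nat.twoStepInduction with
  | zero => simp [signRecSeq]
  | one => simp [signRecSeq]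
  | more n ih₀ ih₁ =>
    simp only [signRecSeq]
    rw [ih₀, ih₁]
    ring

theorem abs_zero_one_add_one_le {n : ℕ} (hη : ∀ i, 1 ≤ i → i ≤ n → 1 ≤ |η i|) :
    |signRecSeq η 0 1 n| + 1 ≤ |signRecSeq η 0 1 (n + 1)| := by
  induction n with
  | zero => simp [signRecSeq]
  | succ n ih =>
    have hgrow := ih fun i hi hin => hη i hi (by omega)
    set b := signRecSeq η 0 1 (n + 1)
    set c := signRecSeq η 0 1 n
    have hb : |b| ≤ |η (n + 1)| * |b| :=
      le_mul_of_one_le_left (abs_nonneg b) (hη (n + 1) (by omega) le_rfl)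
    calc |b| + 1 ≤ 2 * (|η (n + 1)| * |b|) - |c| := by linarith
      _ = |2 * η (n + 1) * b| - |c| := by rw [abs_mul, abs_mul, abs_two, mul_assoc]
      _ ≤ |2 * η (n + 1) * b - c| := abs_sub_abs_le_abs_sub _ _

theorem zero_one_ne_zero {n : ℕ} (hη : ∀ i, 1 ≤ i → i ≤ n → 1 ≤ |η i|) :
    signRecSeq η 0 1 (n + 1) ≠ 0 := by
  have := abs_zero_one_add_one_le η hη
  have := abs_nonneg (signRecSeq η 0 1 n)
  exact abs_pos.mp (by linarith)

theorem eq_iff {n : ℕ} (hslope : signRecSeq η 0 1 n ≠ 0) (z : ℝ) :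
    signRecSeq η x y n = z ↔ y = (z - signRecSeq η x 0 n) / signRecSeq η 0 1 n := by
  rw [eq_add_mul, eq_div_iff hslope]
  constructor <;> intro h <;> linarith

variable {η} in
theorem eq_of_rec {a : ℕ → ℝ} {L : ℕ}
    (ha : ∀ i, 1 ≤ i → i ≤ L → η i * a i = (a (i - 1) + a (i + 1)) / 2) :
    ∀ n, n ≤ L + 1 → a n = signRecSeq η (a 0) (a 1) n := by
  intro n
  induction n using Nat.twoStepInduction with
  | zero => simp [signRecSeq]
  | one => simp [signRecSeq]
  | more n ih₀ ih₁ =>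
    intro hn
    have h := ha (n + 1) (by omega) (by omega)
    simp only [Nat.add_sub_cancel] at h
    rw [signRecSeq, ← ih₀ (by omega), ← ih₁ (by omega)]
    linarith

end signRecSeq

theorem sign_recurrence_exists_unique_boundary_one_general (L : ℕ)
    (η : ℕ → ℝ) (hη : ∀ i, 1 ≤ i → i ≤ L → η i = 1 ∨ η i = -1) :
    ∃ a : ℕ → ℝ,
      (a 0 = 1 ∧ a (L + 1) = 1 ∧
        ∀ i, 1 ≤ i → i ≤ L → η i * a i = (a (i - 1) + a (i + 1)) / 2) ∧
      ∀ a' : ℕ → ℝ,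
        (a' 0 = 1 ∧ a' (L + 1) = 1 ∧
          ∀ i, 1 ≤ i → i ≤ L → η i * a' i = (a' (i - 1) + a' (i + 1)) / 2) →
        ∀ i, i ≤ L + 1 → a' i = a i := by
  have hslope : signRecSeq η 0 1 (L + 1) ≠ 0 :=
    signRecSeq.zero_one_ne_zero η fun i hi hiL => by
      rcases hη i hi hiL with h | h <;> simp [h]
  set y := (1 - signRecSeq η 1 0 (L + 1)) / signRecSeq η 0 1 (L + 1)
  refine ⟨signRecSeq η 1 y, ⟨rfl, (signRecSeq.eq_iff η 1 y hslope 1).2 rfl,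
    fun i hi _ => signRecSeq.rec η 1 y hi⟩, ?_⟩
  rintro a' ⟨h₀, hL, hrec⟩ i hi
  have ha' := signRecSeq.eq_of_rec hrec
  rw [h₀] at ha'
  have h₁ : a' 1 = y :=
    (signRecSeq.eq_iff η 1 (a' 1) hslope 1).1 ((ha' (L + 1) le_rfl).symm.trans hL)
  rw [ha' i hi, h₁]

/-- For any sign sequence `η : {1,…,L} → {−1,+1}` there exist unique real numbers
`a 0, …, a (L+1)` satisfying the sign recurrence for `η` with the boundary
conditions `a 0 = a (L+1) = 1`. -/
theorem sign_recurrence_exists_unique_boundary_one (L : ℕ) (hL : 1 ≤ L)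
    (η : ℕ → ℝ) (hη : ∀ i, 1 ≤ i → i ≤ L → η i = 1 ∨ η i = -1) :
    ∃ a : ℕ → ℝ,
      (a 0 = 1 ∧ a (L + 1) = 1 ∧
        ∀ i, 1 ≤ i → i ≤ L → η i * a i = (a (i - 1) + a (i + 1)) / 2) ∧
      ∀ a' : ℕ → ℝ,
        (a' 0 = 1 ∧ a' (L + 1) = 1 ∧
          ∀ i, 1 ≤ i → i ≤ L → η i * a' i = (a' (i - 1) + a' (i + 1)) / 2) →
        ∀ i, i ≤ L + 1 → a' i = a i :=
  sign_recurrence_exists_unique_boundary_one_general L η hη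
end

section
/- Let m ≥ 0 be an integer and let L = 4m+3. Then the number of sign sequences η : {1,…,L} → {−1,+1} for which there exists a real sequence a₀, a₁, …, a_{L+1} satisfying the sign recurrence for η with a₀ = a_{L+1} = 1 and with a_i = 0 for some 1 ≤ i ≤ L, is at least 2^{(L+1)/2} = 2^{2m+2}. -/
namespace DegAux

/-- Generic second-order sign recurrence. -/
def recSeq (σ : ℕ → ℝ) (x0 x1 : ℝ) : ℕ → ℝ
  | 0 => x0
  | 1 => x1
  | (i+2) => 2 * σ i * recSeq σ x0 x1 (i+1) - recSeq σ x0 x1 i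

/-- Sign function encoded by a Boolean vector. -/
def σf (m : ℕ) (ε : Fin (2*m+2) → Bool) (k : ℕ) : ℝ :=
  if h : k < 2*m+2 then (if ε ⟨k, h⟩ then 1 else -1) else 1

def pf (m : ℕ) (ε : Fin (2*m+2) → Bool) : ℕ → ℝ := recSeq (σf m ε) 1 0
def qf (m : ℕ) (ε : Fin (2*m+2) → Bool) : ℕ → ℝ := recSeq (σf m ε) 0 1

noncomputable def tf (m : ℕ) (ε : Fin (2*m+2) → Bool) : ℝ :=
  -(pf m ε (2*m+2)) / qf m ε (2*m+2)

noncomputable def bf (m : ℕ) (ε : Fin (2*m+2) → Bool) (i : ℕ) : ℝ :=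
  pf m ε i + qf m ε i * tf m ε

noncomputable def aF (m : ℕ) (ε : Fin (2*m+2) → Bool) (i : ℕ) : ℝ :=
  if i ≤ 2*m+2 then bf m ε i
  else (-1)^(i - (2*m+2)) * bf m ε (2*(2*m+2) - i)

def etaF (m : ℕ) (ε : Fin (2*m+2) → Bool) : Fin (4*m+3) → ℝ :=
  fun j => if (j:ℕ) + 1 ≤ 2*m+2 then σf m ε j else - σf m ε (4*m+2 - (j:ℕ))

lemma σ_pm (m : ℕ) (ε : Fin (2*m+2) → Bool) (k : ℕ) :
    σf m ε k = 1 ∨ σf m ε k = -1 := by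
  unfold σf
  split
  · split
    · exact Or.inl rfl
    · exact Or.inr rfl
  · exact Or.inl rfl

lemma abs_σ (m : ℕ) (ε : Fin (2*m+2) → Bool) (k : ℕ) : |σf m ε k| = 1 := by
  rcases σ_pm m ε k with h | h <;> simp [h]

lemma p_rec (m : ℕ) (ε : Fin (2*m+2) → Bool) (i : ℕ) :
    pf m ε (i+2) = 2 * σf m ε i * pf m ε (i+1) - pf m ε i := by
  simp [pf, recSeq]

lemma q_rec (m : ℕ) (ε : Fin (2*m+2) → Bool) (i : ℕ) :
    qf m ε (i+2) = 2 * σf m ε i * qf m ε (i+1) - qf m ε i := by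
  simp [qf, recSeq]

lemma q_grow (m : ℕ) (ε : Fin (2*m+2) → Bool) :
    ∀ i, |qf m ε i| + 1 ≤ |qf m ε (i+1)| := by
  intro i
  induction i with
  | zero => simp [qf, recSeq]
  | succ i ih =>
      have h := abs_sub_abs_le_abs_sub (2 * σf m ε i * qf m ε (i+1)) (qf m ε i)
      have h2 : |2 * σf m ε i * qf m ε (i+1)| = 2 * |qf m ε (i+1)| := by
        rw [abs_mul, abs_mul, abs_σ]
        norm_num
      rw [h2] at h
      rw [q_rec] at *
      linarith
lemma q_ne (m : ℕ) (ε : Fin (2*m+2) → Bool) : qf m ε (2*m+2) ≠ 0 := by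
  have h := q_grow m ε (2*m+1)
  have h0 : (0:ℝ) ≤ |qf m ε (2*m+1)| := abs_nonneg _
  intro hc
  have : qf m ε (2*m+1+1) = 0 := hc
  rw [this] at h
  simp at h
  linarith

lemma b_rec (m : ℕ) (ε : Fin (2*m+2) → Bool) (i : ℕ) :
    bf m ε (i+2) = 2 * σf m ε i * bf m ε (i+1) - bf m ε i := by
  unfold bf
  rw [p_rec, q_rec]
  ring

lemma b0 (m : ℕ) (ε : Fin (2*m+2) → Bool) : bf m ε 0 = 1 := by
  simp [bf, pf, qf, recSeq]

lemma bM (m : ℕ) (ε : Fin (2*m+2) → Bool) : bf m ε (2*m+2) = 0 := by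
  have hq := q_ne m ε
  unfold bf tf
  field_simp
  ring

lemma a_le (m : ℕ) (ε : Fin (2*m+2) → Bool) (i : ℕ) (h : i ≤ 2*m+2) :
    aF m ε i = bf m ε i := by
  simp only [aF, if_pos h]

lemma a_mirror (m : ℕ) (ε : Fin (2*m+2) → Bool) (k : ℕ) (hk : k ≤ 2*m+2) :
    aF m ε (2*m+2 + k) = (-1)^k * bf m ε (2*m+2 - k) := by
  match k with
  | 0 => simp [aF]
  | (k+1) =>
      unfold aF
      rw [if_neg (by omega)]
      rw [show 2*m+2 + (k+1) - (2*m+2) = k+1 from by omega,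
          show 2*(2*m+2) - (2*m+2 + (k+1)) = 2*m+2 - (k+1) from by omega]

lemma etaF_eval (m : ℕ) (ε : Fin (2*m+2) → Bool) (k : Fin (2*m+2)) :
    etaF m ε ⟨(k:ℕ), by have := k.2; omega⟩ = if ε k then 1 else -1 := by
  unfold etaF σf
  rw [if_pos (show ((⟨(k:ℕ), by have := k.2; omega⟩ : Fin (4*m+3)) : ℕ) + 1 ≤ 2*m+2 by
        simp only [Fin.val_mk]; have := k.2; omega),
      dif_pos (show ((⟨(k:ℕ), by have := k.2; omega⟩ : Fin (4*m+3)) : ℕ) < 2*m+2 from k.2)]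

lemma etaF_inj (m : ℕ) : Function.Injective (etaF m) := by
  intro ε1 ε2 h
  funext k
  have hh := congrFun h ⟨(k:ℕ), by have := k.2; omega⟩
  rw [etaF_eval, etaF_eval] at hh
  cases h1 : ε1 k <;> cases h2 : ε2 k <;> rw [h1, h2] at hh <;> norm_num at hh

end DegAux

open DegAux in
/-- For `L = 4m + 3`, the number of sign sequences `η : {1,…,L} → {−1,+1}`
(encoded as `η : Fin L → ℝ`, where `η j` is the sign at site `j+1`) whose
boundary-value solution of the sign recurrence with `a 0 = a (L+1) = 1` has a
vanishing entry `a i = 0` for some `1 ≤ i ≤ L`, is at least `2^((L+1)/2) = 2^(2m+2)`. -/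
theorem degenerate_sign_sequences_lower_bound (m L : ℕ) (hL : L = 4 * m + 3) :
    2 ^ (2 * m + 2) ≤
      Set.ncard {η : Fin L → ℝ |
        (∀ j, η j = 1 ∨ η j = -1) ∧
        ∃ a : ℕ → ℝ, a 0 = 1 ∧ a (L + 1) = 1 ∧
          (∀ j : Fin L, η j * a ((j : ℕ) + 1) = (a (j : ℕ) + a ((j : ℕ) + 2)) / 2) ∧
          ∃ i, 1 ≤ i ∧ i ≤ L ∧ a i = 0} := by
  subst hL
  set S := {η : Fin (4*m+3) → ℝ |
        (∀ j, η j = 1 ∨ η j = -1) ∧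
        ∃ a : ℕ → ℝ, a 0 = 1 ∧ a (4*m+3 + 1) = 1 ∧
          (∀ j : Fin (4*m+3), η j * a ((j : ℕ) + 1) = (a (j : ℕ) + a ((j : ℕ) + 2)) / 2) ∧
          ∃ i, 1 ≤ i ∧ i ≤ 4*m+3 ∧ a i = 0} with hS
  have hsub : Set.range (etaF m) ⊆ S := by
    rintro _ ⟨ε, rfl⟩
    refine ⟨?_, aF m ε, ?_, ?_, ?_, 2*m+2, by omega, by omega, ?_⟩
    · intro j
      unfold etaF
      split
      · exact σ_pm m ε j
      · rcases σ_pm m ε (4*m+2 - (j:ℕ)) with h | h <;> simp [h]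
    · rw [a_le m ε 0 (by omega), b0]
    · have h1 : 4*m+3+1 = 2*m+2 + (2*m+2) := by omega
      rw [h1, a_mirror m ε (2*m+2) le_rfl]
      rw [show 2*m+2 - (2*m+2) = 0 from by omega, b0]
      have : ((-1:ℝ))^(2*m+2) = 1 := Even.neg_one_pow ⟨m+1, by ring⟩
      rw [this, mul_one]
    · intro j
      have hj : (j:ℕ) < 4*m+3 := j.2
      by_cases h1 : (j:ℕ) + 1 ≤ 2*m+1
      · rw [a_le m ε (j:ℕ) (by omega), a_le m ε ((j:ℕ)+1) (by omega),
            a_le m ε ((j:ℕ)+2) (by omega)]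
        have he : etaF m ε j = σf m ε j := by
          unfold etaF; rw [if_pos (by omega)]
        rw [he]
        have hb := b_rec m ε (j:ℕ)
        linarith
      · by_cases h2 : (j:ℕ) + 1 = 2*m+2
        · have e1 : aF m ε ((j:ℕ)+1) = 0 := by
            rw [h2, a_le m ε _ le_rfl, bM]
          have e2 : aF m ε ((j:ℕ)+2) = - bf m ε (2*m+1) := by
            rw [show (j:ℕ)+2 = 2*m+2 + 1 from by omega, a_mirror m ε 1 (by omega)]
            rw [show 2*m+2 - 1 = 2*m+1 from by omega]
            ring
          have e3 : aF m ε (j:ℕ) = bf m ε (2*m+1) := by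
            rw [show (j:ℕ) = 2*m+1 from by omega, a_le m ε _ (by omega)]
          rw [e1, e2, e3]
          ring
        · -- j = 2m+2 + k', k' ≤ 2m
          obtain ⟨k', hj', hk'⟩ : ∃ k', (j:ℕ) = 2*m+2 + k' ∧ k' ≤ 2*m :=
            ⟨(j:ℕ) - (2*m+2), by omega, by omega⟩
          have he : etaF m ε j = - σf m ε (2*m - k') := by
            unfold etaF
            rw [if_neg (by omega), show 4*m+2 - (j:ℕ) = 2*m - k' from by omega]
          have ea0 : aF m ε (j:ℕ) = (-1)^k' * bf m ε ((2*m - k') + 2) := by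
            rw [hj', a_mirror m ε k' (by omega),
                show 2*m+2 - k' = (2*m - k') + 2 from by omega]
          have ea1 : aF m ε ((j:ℕ)+1) = (-1)^(k'+1) * bf m ε ((2*m - k') + 1) := by
            rw [hj', show 2*m+2 + k' + 1 = 2*m+2 + (k'+1) from rfl,
                a_mirror m ε (k'+1) (by omega),
                show 2*m+2 - (k'+1) = (2*m - k') + 1 from by omega]
          have ea2 : aF m ε ((j:ℕ)+2) = (-1)^(k'+2) * bf m ε (2*m - k') := by
            rw [hj', show 2*m+2 + k' + 2 = 2*m+2 + (k'+2) from rfl,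
                a_mirror m ε (k'+2) (by omega),
                show 2*m+2 - (k'+2) = 2*m - k' from by omega]
          rw [he, ea0, ea1, ea2, b_rec m ε (2*m - k'), pow_succ, pow_succ, pow_succ]
          ring
    · rw [a_le m ε (2*m+2) le_rfl]
      exact bM m ε
  have hfin : S.Finite := by
    have hsub2 : S ⊆ Set.pi Set.univ (fun _ : Fin (4*m+3) => ({1, -1} : Set ℝ)) := by
      intro η hη
      rw [Set.mem_pi]
      intro j _
      rcases hη.1 j with h | h <;> simp [h]
    exact (Set.Finite.pi (fun _ => (Set.finite_singleton _).insert _)).subset hsub2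
  calc 2 ^ (2*m+2) = Nat.card (Fin (2*m+2) → Bool) := by
        simp [Nat.card_eq_fintype_card]
    _ = Nat.card (Set.range (etaF m)) := (Nat.card_range_of_injective (etaF_inj m)).symm
    _ = (Set.range (etaF m)).ncard := Nat.card_coe_set_eq _
    _ ≤ S.ncard := Set.ncard_le_ncard hsub hfin
end

section
/- Let V be a complex vector space and let a₀, a₁, …, a_{L+1} be pairwise commuting linear endomorphisms of V with a₀ = a_{L+1} = id, satisfying a_i² = (1/4)·(a_{i−1} + a_{i+1})² for every 1 ≤ i ≤ L. Let v₁, v₂ ∈ V be linearly independent vectors and let λ₀, …, λ_{L+1} and α₀, …, α_{L+1} be complex numbers such that a_i v₁ = λ_i v₁ and a_i v₂ = λ_i v₂ + α_i v₁ for every 0 ≤ i ≤ L+1 (so in particular λ₀ = λ_{L+1} = 1 and α₀ = α_{L+1} = 0). Suppose there are signs η(i) ∈ {−1,+1} with η(i)·λ_i = (λ_{i−1} + λ_{i+1})/2 for every 1 ≤ i ≤ L. Then for every 1 ≤ i ≤ L with λ_i ≠ 0, one has η(i)·α_i = (α_{i−1} + α_{i+1})/2. -/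
/-- For commuting operators satisfying `aᵢ² = (1/4)(aᵢ₋₁ + aᵢ₊₁)²` with identity
boundary operators, a common eigenvector `v₁` (eigenvalues `λᵢ` satisfying the
sign recurrence) and a rank-2 generalized eigenvector `v₂` with off-diagonal
coefficients `αᵢ`: wherever `λᵢ ≠ 0`, the `αᵢ` satisfy the same sign recurrence. -/
theorem generalized_eigenvector_coefficients_recurrence
    {V : Type*} [AddCommGroup V] [Module ℂ V] (L : ℕ)
    (a : ℕ → Module.End ℂ V)
    (hcomm : ∀ i j, Commute (a i) (a j))
    (h0 : a 0 = 1) (hL1 : a (L + 1) = 1)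
    (hrel : ∀ i, 1 ≤ i → i ≤ L →
      (a i) ^ 2 = ((1 : ℂ) / 4) • (a (i - 1) + a (i + 1)) ^ 2)
    (v₁ v₂ : V) (hind : LinearIndependent ℂ ![v₁, v₂])
    (lam alpha : ℕ → ℂ)
    (hv1 : ∀ i, i ≤ L + 1 → a i v₁ = lam i • v₁)
    (hv2 : ∀ i, i ≤ L + 1 → a i v₂ = lam i • v₂ + alpha i • v₁)
    (η : ℕ → ℝ) (hη : ∀ i, 1 ≤ i → i ≤ L → η i = 1 ∨ η i = -1)
    (hlam : ∀ i, 1 ≤ i → i ≤ L →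
      (η i : ℂ) * lam i = (lam (i - 1) + lam (i + 1)) / 2) :
    ∀ i, 1 ≤ i → i ≤ L → lam i ≠ 0 →
      (η i : ℂ) * alpha i = (alpha (i - 1) + alpha (i + 1)) / 2 := by
  intro i h1 hiL hne
  have hi : i ≤ L + 1 := by omega
  have him : i - 1 ≤ L + 1 := by omega
  have hip : i + 1 ≤ L + 1 := by omega
  -- action of a j ∘ a k on v₂
  have key : ∀ j k, j ≤ L + 1 → k ≤ L + 1 →
      a j (a k v₂) = (lam j * lam k) • v₂ + (lam j * alpha k + alpha j * lam k) • v₁ := by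
    intro j k hj hk
    rw [hv2 k hk, map_add, map_smul, map_smul, hv2 j hj, hv1 j hj,
      smul_add, smul_smul, smul_smul, smul_smul]
    module
  have e1 : ((a i) ^ 2) v₂ = (lam i * lam i) • v₂ + (2 * (lam i * alpha i)) • v₁ := by
    rw [pow_two, Module.End.mul_apply, key i i hi hi]
    module
  have e2 : (((1 : ℂ) / 4) • (a (i - 1) + a (i + 1)) ^ 2) v₂ =
      ((1 / 4) * (lam (i-1) + lam (i+1)) * (lam (i-1) + lam (i+1))) • v₂ +
      ((1 / 4) * 2 * ((lam (i-1) + lam (i+1)) * (alpha (i-1) + alpha (i+1)))) • v₁ := by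
    rw [LinearMap.smul_apply, pow_two, Module.End.mul_apply, LinearMap.add_apply,
      LinearMap.add_apply, map_add, map_add,
      key (i-1) (i-1) him him, key (i-1) (i+1) him hip,
      key (i+1) (i-1) hip him, key (i+1) (i+1) hip hip]
    module
  have heq : ((a i) ^ 2) v₂ = (((1 : ℂ) / 4) • (a (i - 1) + a (i + 1)) ^ 2) v₂ := by
    rw [hrel i h1 hiL]
  rw [e1, e2] at heq
  have hzero :
      ((1 / 4) * 2 * ((lam (i-1) + lam (i+1)) * (alpha (i-1) + alpha (i+1)))
        - 2 * (lam i * alpha i)) • v₁ +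
      ((1 / 4) * (lam (i-1) + lam (i+1)) * (lam (i-1) + lam (i+1))
        - lam i * lam i) • v₂ = 0 := by
    have h := sub_eq_zero.mpr heq.symm
    rw [← h]; module
  have hpair := (LinearIndependent.pair_iff.mp hind) _ _ hzero
  have hc1 : (1 / 4) * 2 * ((lam (i-1) + lam (i+1)) * (alpha (i-1) + alpha (i+1)))
      = 2 * (lam i * alpha i) := by
    have := hpair.1; linear_combination this
  have hsum : lam (i-1) + lam (i+1) = 2 * (η i : ℂ) * lam i := by
    linear_combination (-2 : ℂ) * hlam i h1 hiL
  have hη2 : (η i : ℂ) * (η i : ℂ) = 1 := by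
    rcases hη i h1 hiL with h | h <;> rw [h] <;> norm_num
  have hasum : alpha (i-1) + alpha (i+1) = 2 * (η i : ℂ) * alpha i := by
    have h2 : (η i : ℂ) * lam i * (alpha (i-1) + alpha (i+1)) = 2 * (lam i * alpha i) := by
      rw [← hc1, hsum]; ring
    have h3 : lam i * ((η i : ℂ) * (alpha (i-1) + alpha (i+1)))
        = lam i * (2 * alpha i) := by linear_combination h2
    have h4 := mul_left_cancel₀ hne h3
    calc alpha (i-1) + alpha (i+1)
        = (η i : ℂ) * (η i : ℂ) * (alpha (i-1) + alpha (i+1)) := by rw [hη2]; ring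
      _ = 2 * (η i : ℂ) * alpha i := by rw [mul_assoc, h4]; ring
  rw [hasum]; ring
end

section
/- Let Q, Q′ : ℝ² → ℝ be polynomial functions of total degree at most 2, and let ρ = ΔQ and ρ′ = ΔQ′ denote their (constant) Laplacians. Suppose there exist two distinct points p ≠ q in ℝ² at which Q(p) = Q′(p), Q(q) = Q′(q), ∇Q(p) = ∇Q′(p), and ∇Q(q) = ∇Q′(q). Let ℓ be the straight line through p and q. Then for every x ∈ ℝ², Q′(x) = Q(x) + (1/2)·(ρ′ − ρ)·dist(x, ℓ)². In particular, if ρ ≠ ρ′, then the set {x ∈ ℝ² : Q(x) = Q′(x)} is exactly the line ℓ. -/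
/-!
Put `D = Q' - Q`, again a quadratic polynomial, with Laplacian `ρ' - ρ`. Since `D` and `∇D`
vanish at `p`, Taylor expansion at `p` leaves only the quadratic part `H` of `D`, evaluated at
`x - p`; since `∇D` also vanishes at `q`, the symmetric matrix of `H` kills `u = q - p`. In the
plane this forces `H w = (tr H) ‖w⊥‖²`, where `w⊥` is the component of `w` orthogonal to `u` and
`tr H = (ρ' - ρ) / 2`; and `‖(x - p)⊥‖` is the distance from `x` to the line `pq`. When `ρ ≠ ρ'`,
`D` therefore vanishes exactly where this distance does.
-/

open Metric

section InnerProductSpace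

variable {E : Type*} [NormedAddCommGroup E] [InnerProductSpace ℝ E]

theorem dist_lineMap_eq_norm_sub_smul (p q x : E) (r : ℝ) :
    dist x (AffineMap.lineMap p q r) = ‖(x - p) - r • (q - p)‖ := by
  rw [dist_eq_norm, AffineMap.lineMap_apply, vsub_eq_sub, vadd_eq_add]
  congr 1
  abel

theorem norm_sub_smul_sq (u v : E) (r : ℝ) :
    ‖v - r • u‖ ^ 2 = ‖v‖ ^ 2 - 2 * r * inner ℝ u v + r ^ 2 * ‖u‖ ^ 2 := by
  rw [norm_sub_sq_real, inner_smul_right, norm_smul, real_inner_comm, mul_pow, Real.norm_eq_abs,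
    sq_abs]
  ring

theorem infDist_affineSpan_pair_sq_mul_norm_sq (p q x : E) :
    infDist x (affineSpan ℝ {p, q}) ^ 2 * ‖q - p‖ ^ 2
      = ‖q - p‖ ^ 2 * ‖x - p‖ ^ 2 - inner ℝ (q - p) (x - p) ^ 2 := by
  rcases eq_or_ne p q with rfl | hpq
  · simp
  set u := q - p
  set v := x - p
  have hu : ‖u‖ ^ 2 ≠ 0 := by simp [u, sub_eq_zero, hpq.symm]
  obtain ⟨r₀, hr₀⟩ : ∃ r₀ : ℝ, r₀ * ‖u‖ ^ 2 = inner ℝ u v := ⟨_, div_mul_cancel₀ _ hu⟩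
  have hfoot : infDist x (affineSpan ℝ {p, q}) = ‖v - r₀ • u‖ := by
    refine le_antisymm ?_ ((le_infDist ⟨p, left_mem_affineSpan_pair ℝ p q⟩).2 fun y hy => ?_)
    · rw [← dist_lineMap_eq_norm_sub_smul]
      exact infDist_le_dist_of_mem (AffineMap.lineMap_mem_affineSpan_pair r₀ p q)
    · obtain ⟨r, rfl⟩ := mem_affineSpan_pair_iff_exists_lineMap_eq.1 hy
      rw [dist_lineMap_eq_norm_sub_smul]
      have hpyth : ‖v - r • u‖ ^ 2 = ‖v - r₀ • u‖ ^ 2 + (r - r₀) ^ 2 * ‖u‖ ^ 2 := by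
        rw [norm_sub_smul_sq, norm_sub_smul_sq]
        linear_combination (2 * r - 2 * r₀) * hr₀
      refine (pow_le_pow_iff_left₀ (norm_nonneg _) (norm_nonneg _) two_ne_zero).1 ?_
      rw [hpyth]
      exact le_add_of_nonneg_right (by positivity)
  rw [hfoot, norm_sub_smul_sq]
  linear_combination (r₀ * ‖u‖ ^ 2 - inner ℝ u v) * hr₀

end InnerProductSpace

local notation "ℝ²" => EuclideanSpace ℝ (Fin 2)

theorem EuclideanSpace.norm_sq_mul_norm_sq_sub_inner_sq (u w : ℝ²) :
    ‖u‖ ^ 2 * ‖w‖ ^ 2 - inner ℝ u w ^ 2 = (u 0 * w 1 - u 1 * w 0) ^ 2 := by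
  simp only [EuclideanSpace.norm_sq_eq, EuclideanSpace.inner_eq_star_dotProduct, Fin.sum_univ_two,
    Real.norm_eq_abs, sq_abs, dotProduct, Pi.star_apply, star_trivial]
  ring

def quadPoly (a b c d e f : ℝ) (x : ℝ²) : ℝ :=
  a * x 0 ^ 2 + b * x 0 * x 1 + c * x 1 ^ 2 + d * x 0 + e * x 1 + f

section quadPoly

variable (a b c d e f : ℝ)

theorem hasFDerivAt_quadPoly (x : ℝ²) :
    HasFDerivAt (quadPoly a b c d e f)
      ((2 * a * x 0 + b * x 1 + d) • EuclideanSpace.proj (𝕜 := ℝ) (0 : Fin 2)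
        + (b * x 0 + 2 * c * x 1 + e) • EuclideanSpace.proj (𝕜 := ℝ) (1 : Fin 2)) x := by
  have h0 := PiLp.hasFDerivAt_apply (𝕜 := ℝ) 2 x 0
  have h1 := PiLp.hasFDerivAt_apply (𝕜 := ℝ) 2 x 1
  refine (((((((h0.pow 2).const_mul a).add ((h0.const_mul b).mul h1)).add
    ((h1.pow 2).const_mul c)).add (h0.const_mul d)).add (h1.const_mul e)).add_const f).congr_fderiv ?_
  ext v
  simp only [Nat.add_one_sub_one, pow_one, nsmul_eq_mul, Nat.cast_ofNat, add_apply, smul_apply,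
    PiLp.proj_apply, smul_eq_mul]
  ring

theorem fderiv_quadPoly_apply (x v : ℝ²) :
    fderiv ℝ (quadPoly a b c d e f) x v
      = (2 * a * x 0 + b * x 1 + d) * v 0 + (b * x 0 + 2 * c * x 1 + e) * v 1 := by
  simp [(hasFDerivAt_quadPoly a b c d e f x).fderiv]

theorem differentiable_quadPoly : Differentiable ℝ (quadPoly a b c d e f) :=
  fun x => (hasFDerivAt_quadPoly a b c d e f x).differentiableAt

theorem quadPoly_eq_taylor (p x : ℝ²) :
    quadPoly a b c d e f x = quadPoly a b c d e f p
      + fderiv ℝ (quadPoly a b c d e f) p (x - p) + quadPoly a b c 0 0 0 (x - p) := by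
  simp only [fderiv_quadPoly_apply, quadPoly, PiLp.sub_apply]
  ring

variable {a b c d e f}

theorem quadPoly_mul_norm_sq_of_fderiv_eq {p q : ℝ²}
    (h : fderiv ℝ (quadPoly a b c d e f) p = fderiv ℝ (quadPoly a b c d e f) q) (w : ℝ²) :
    quadPoly a b c 0 0 0 w * ‖q - p‖ ^ 2 = (a + c) * ((q - p) 0 * w 1 - (q - p) 1 * w 0) ^ 2 := by
  set u := q - p
  have hHu (v : ℝ²) : (2 * a * u 0 + b * u 1) * v 0 + (b * u 0 + 2 * c * u 1) * v 1 = 0 := by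
    have := congr($h v)
    rw [fderiv_quadPoly_apply, fderiv_quadPoly_apply] at this
    simp only [u, PiLp.sub_apply]
    linear_combination -this
  have hu0 : 2 * a * u 0 + b * u 1 = 0 := by simpa using hHu (EuclideanSpace.single 0 1)
  have hu1 : b * u 0 + 2 * c * u 1 = 0 := by simpa using hHu (EuclideanSpace.single 1 1)
  rw [EuclideanSpace.norm_sq_eq, Fin.sum_univ_two, Real.norm_eq_abs, Real.norm_eq_abs, sq_abs, sq_abs]
  simp only [quadPoly]
  linear_combination ((w 0 ^ 2 - w 1 ^ 2) * u 0 / 2 + w 0 * w 1 * u 1) * hu0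
    + (w 0 * w 1 * u 0 - (w 0 ^ 2 - w 1 ^ 2) * u 1 / 2) * hu1

theorem quadPoly_eq_mul_infDist_sq {p q : ℝ²} (hpq : p ≠ q) (hp₀ : quadPoly a b c d e f p = 0)
    (hp : fderiv ℝ (quadPoly a b c d e f) p = 0) (hq : fderiv ℝ (quadPoly a b c d e f) q = 0)
    (x : ℝ²) : quadPoly a b c d e f x = (a + c) * infDist x (affineSpan ℝ {p, q}) ^ 2 := by
  have hu : ‖q - p‖ ^ 2 ≠ 0 := by simp [sub_eq_zero, hpq.symm]
  apply mul_right_cancel₀ hu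
  rw [quadPoly_eq_taylor a b c d e f p x, hp₀, hp, zero_apply, zero_add,
    zero_add, quadPoly_mul_norm_sq_of_fderiv_eq (hp.trans hq.symm),
    ← EuclideanSpace.norm_sq_mul_norm_sq_sub_inner_sq, mul_assoc,
    infDist_affineSpan_pair_sq_mul_norm_sq]

end quadPoly

theorem setOf_eq_eq_of_forall_eq_add_mul_infDist_sq {X : Type*} [MetricSpace X] {f g : X → ℝ}
    {s : Set X} {k : ℝ} (hk : k ≠ 0) (hs : IsClosed s) (hne : s.Nonempty)
    (h : ∀ x, g x = f x + k * infDist x s ^ 2) : {x | f x = g x} = s := by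
  ext x
  rw [Set.mem_ofPred_eq, hs.mem_iff_infDist_zero hne, h x]
  simp [hk]

theorem quadratic_patch_matching_general
    (a b c d e f a' b' c' d' e' f' ρ ρ' : ℝ)
    (Q Q' : EuclideanSpace ℝ (Fin 2) → ℝ)
    (hQ : ∀ x, Q x = a * (x 0) ^ 2 + b * (x 0) * (x 1) + c * (x 1) ^ 2
      + d * (x 0) + e * (x 1) + f)
    (hQ' : ∀ x, Q' x = a' * (x 0) ^ 2 + b' * (x 0) * (x 1) + c' * (x 1) ^ 2
      + d' * (x 0) + e' * (x 1) + f')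
    (hρ : ρ = 2 * a + 2 * c) (hρ' : ρ' = 2 * a' + 2 * c')
    (p q : EuclideanSpace ℝ (Fin 2)) (hpq : p ≠ q)
    (hQp : Q p = Q' p)
    (hdp : fderiv ℝ Q p = fderiv ℝ Q' p)
    (hdq : fderiv ℝ Q q = fderiv ℝ Q' q) :
    (∀ x, Q' x = Q x + (1 / 2) * (ρ' - ρ) *
      (Metric.infDist x (affineSpan ℝ {p, q} : Set (EuclideanSpace ℝ (Fin 2)))) ^ 2) ∧
    (ρ ≠ ρ' → {x | Q x = Q' x}
      = (affineSpan ℝ {p, q} : Set (EuclideanSpace ℝ (Fin 2)))) := by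
  have hQfun : Q = quadPoly a b c d e f := funext hQ
  have hQ'fun : Q' = quadPoly a' b' c' d' e' f' := funext hQ'
  have hsub : Q' - Q = quadPoly (a' - a) (b' - b) (c' - c) (d' - d) (e' - e) (f' - f) := by
    ext x
    simp only [Pi.sub_apply, hQ, hQ', quadPoly]
    ring
  have hfderiv_sub (y) : fderiv ℝ (Q' - Q) y = fderiv ℝ Q' y - fderiv ℝ Q y := by
    rw [hQfun, hQ'fun]
    exact fderiv_sub (differentiable_quadPoly ..) (differentiable_quadPoly ..)
  have hdist := quadPoly_eq_mul_infDist_sq hpq (by rw [← hsub, Pi.sub_apply, hQp, sub_self])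
    (by rw [← hsub, hfderiv_sub, hdp, sub_self]) (by rw [← hsub, hfderiv_sub, hdq, sub_self])
  have hmain (x) : Q' x = Q x + (1 / 2) * (ρ' - ρ) * infDist x (affineSpan ℝ {p, q}) ^ 2 := by
    have := hdist x
    rw [← hsub, Pi.sub_apply] at this
    rw [hρ, hρ']
    linarith
  refine ⟨hmain, fun hρρ' => setOf_eq_eq_of_forall_eq_add_mul_infDist_sq ?_
    (AffineSubspace.closed_of_finiteDimensional _) ⟨p, left_mem_affineSpan_pair ℝ p q⟩ hmain⟩
  exact mul_ne_zero one_half_pos.ne' (sub_ne_zero.2 hρρ'.symm)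

/-- Two quadratic polynomials on ℝ² that agree to first order at two distinct
points `p ≠ q` differ exactly by `(1/2)(ρ′ − ρ)` times the squared distance to the
line through `p` and `q`, where `ρ, ρ′` are their (constant) Laplacians; in
particular, if `ρ ≠ ρ′` their agreement set is exactly that line. -/
theorem quadratic_patch_matching
    (a b c d e f a' b' c' d' e' f' ρ ρ' : ℝ)
    (Q Q' : EuclideanSpace ℝ (Fin 2) → ℝ)
    (hQ : ∀ x, Q x = a * (x 0) ^ 2 + b * (x 0) * (x 1) + c * (x 1) ^ 2
      + d * (x 0) + e * (x 1) + f)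
    (hQ' : ∀ x, Q' x = a' * (x 0) ^ 2 + b' * (x 0) * (x 1) + c' * (x 1) ^ 2
      + d' * (x 0) + e' * (x 1) + f')
    (hρ : ρ = 2 * a + 2 * c) (hρ' : ρ' = 2 * a' + 2 * c')
    (p q : EuclideanSpace ℝ (Fin 2)) (hpq : p ≠ q)
    (hQp : Q p = Q' p) (hQq : Q q = Q' q)
    (hdp : fderiv ℝ Q p = fderiv ℝ Q' p)
    (hdq : fderiv ℝ Q q = fderiv ℝ Q' q) :
    (∀ x, Q' x = Q x + (1 / 2) * (ρ' - ρ) *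
      (Metric.infDist x (affineSpan ℝ {p, q} : Set (EuclideanSpace ℝ (Fin 2)))) ^ 2) ∧
    (ρ ≠ ρ' → {x | Q x = Q' x}
      = (affineSpan ℝ {p, q} : Set (EuclideanSpace ℝ (Fin 2)))) :=
  quadratic_patch_matching_general a b c d e f a' b' c' d' e' f' ρ ρ' Q Q' hQ hQ' hρ hρ' p q hpq hQp
    hdp hdq
end

section
/- Let m, n, d, e, f and m′, n′, d′, e′, f′ and η₀ be real numbers. Define φ(ξ,η) = (1/8)(m+1)ξ² + (1/4)n·ξη + (1/8)(1−m)η² + dξ + eη + f and φ′(ξ,η) = (1/8)m′(ξ² − η²) + (1/4)n′·ξη + d′ξ + e′η + f′. Suppose that φ and φ′ and their first partial derivatives agree at every point of the horizontal line η = η₀ (i.e., φ(ξ,η₀) = φ′(ξ,η₀), ∂_ξφ(ξ,η₀) = ∂_ξφ′(ξ,η₀), and ∂_ηφ(ξ,η₀) = ∂_ηφ′(ξ,η₀) for all ξ ∈ ℝ). Then m′ = m + 1, n′ = n, d′ = d, e′ = e + η₀/2, and f′ = f − η₀²/4. -/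
lemma deriv_quad (a b c x : ℝ) :
    deriv (fun s : ℝ => a * s ^ 2 + b * s + c) x = 2 * a * x + b := by
  have h1 : HasDerivAt (fun s : ℝ => a * s ^ 2 + b * s + c)
      (a * (2 * x ^ 1) + b * 1) x := by
    exact (((hasDerivAt_pow 2 x).const_mul a).add ((hasDerivAt_id x).const_mul b)).add_const c
  have := h1.deriv
  rw [this]; ring

/-- Matching of the quadratic potentials of a density-1/2 patch and a density-0
patch across the horizontal boundary `η = η₀`: continuity of the potential and of
its first partial derivatives along the line forces `m′ = m+1`, `n′ = n`,
`d′ = d`, `e′ = e + η₀/2`, `f′ = f − η₀²/4`. -/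
theorem patch_matching_horizontal_boundary
    (m n d e f m' n' d' e' f' η₀ : ℝ)
    (φ φ' : ℝ → ℝ → ℝ)
    (hφ : ∀ ξ η, φ ξ η = (1 / 8) * (m + 1) * ξ ^ 2 + (1 / 4) * n * ξ * η
      + (1 / 8) * (1 - m) * η ^ 2 + d * ξ + e * η + f)
    (hφ' : ∀ ξ η, φ' ξ η = (1 / 8) * m' * (ξ ^ 2 - η ^ 2) + (1 / 4) * n' * ξ * η
      + d' * ξ + e' * η + f')
    (hval : ∀ ξ, φ ξ η₀ = φ' ξ η₀)
    (hdξ : ∀ ξ, deriv (fun s => φ s η₀) ξ = deriv (fun s => φ' s η₀) ξ)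
    (hdη : ∀ ξ, deriv (fun s => φ ξ s) η₀ = deriv (fun s => φ' ξ s) η₀) :
    m' = m + 1 ∧ n' = n ∧ d' = d ∧ e' = e + η₀ / 2 ∧ f' = f - η₀ ^ 2 / 4 := by
  -- derivative in ξ
  have Dξ : ∀ ξ : ℝ, 2 * ((1/8)*(m+1)) * ξ + ((1/4)*n*η₀ + d)
      = 2 * ((1/8)*m') * ξ + ((1/4)*n'*η₀ + d') := by
    intro ξ
    have h1 : (fun s => φ s η₀)
        = fun s : ℝ => (1/8)*(m+1) * s ^ 2 + ((1/4)*n*η₀ + d) * s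
          + ((1/8)*(1-m)*η₀^2 + e*η₀ + f) := by
      funext s; rw [hφ]; ring
    have h2 : (fun s => φ' s η₀)
        = fun s : ℝ => (1/8)*m' * s ^ 2 + ((1/4)*n'*η₀ + d') * s
          + (-(1/8)*m'*η₀^2 + e'*η₀ + f') := by
      funext s; rw [hφ']; ring
    have := hdξ ξ
    rwa [h1, h2, deriv_quad, deriv_quad] at this
  have Dη : ∀ ξ : ℝ, 2 * ((1/8)*(1-m)) * η₀ + ((1/4)*n*ξ + e)
      = 2 * (-(1/8)*m') * η₀ + ((1/4)*n'*ξ + e') := by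
    intro ξ
    have h1 : (fun s => φ ξ s)
        = fun s : ℝ => (1/8)*(1-m) * s ^ 2 + ((1/4)*n*ξ + e) * s
          + ((1/8)*(m+1)*ξ^2 + d*ξ + f) := by
      funext s; rw [hφ]; ring
    have h2 : (fun s => φ' ξ s)
        = fun s : ℝ => (-(1/8)*m') * s ^ 2 + ((1/4)*n'*ξ + e') * s
          + ((1/8)*m'*ξ^2 + d'*ξ + f') := by
      funext s; rw [hφ']; ring
    have := hdη ξ
    rwa [h1, h2, deriv_quad, deriv_quad] at this
  have E1 := Dξ 0
  have E2 := Dξ 1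
  have E3 := Dη 0
  have E4 := Dη 1
  have E5 := hval 0
  rw [hφ, hφ'] at E5
  have hm : m' = m + 1 := by linarith
  subst hm
  have hn : n' = n := by linarith
  subst hn
  have hd : d' = d := by linarith
  have he : e' = e + η₀ / 2 := by linarith
  refine ⟨rfl, rfl, hd, he, ?_⟩
  rw [he] at E5
  ring_nf at E5 ⊢
  linarith [E5]
end

section
/- Let ρ₁, ρ₂, ρ₃ be real numbers with ρ₁ ≠ ρ₂, ρ₂ ≠ ρ₃, and ρ₃ ≠ ρ₁, and let θ₁, θ₂, θ₃ be real numbers such that (ρ₂ − ρ₁)·e^{2iθ₁} + (ρ₃ − ρ₂)·e^{2iθ₂} + (ρ₁ − ρ₃)·e^{2iθ₃} = 0. Then e^{2iθ₁} = e^{2iθ₂} = e^{2iθ₃}; that is, the three angles are all equal modulo π. -/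
/-- For three pairwise distinct densities, the consistency condition
`(ρ₂−ρ₁)e^{2iθ₁} + (ρ₃−ρ₂)e^{2iθ₂} + (ρ₁−ρ₃)e^{2iθ₃} = 0` has only trivial
solutions: all three angles coincide modulo π. -/
theorem three_patch_meeting_trivial (ρ₁ ρ₂ ρ₃ θ₁ θ₂ θ₃ : ℝ)
    (h12 : ρ₁ ≠ ρ₂) (h23 : ρ₂ ≠ ρ₃) (h31 : ρ₃ ≠ ρ₁)
    (h : ((ρ₂ - ρ₁ : ℝ) : ℂ) * Complex.exp (2 * (θ₁ : ℂ) * Complex.I)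
       + ((ρ₃ - ρ₂ : ℝ) : ℂ) * Complex.exp (2 * (θ₂ : ℂ) * Complex.I)
       + ((ρ₁ - ρ₃ : ℝ) : ℂ) * Complex.exp (2 * (θ₃ : ℂ) * Complex.I) = 0) :
    Complex.exp (2 * (θ₁ : ℂ) * Complex.I) = Complex.exp (2 * (θ₂ : ℂ) * Complex.I) ∧
    Complex.exp (2 * (θ₂ : ℂ) * Complex.I) = Complex.exp (2 * (θ₃ : ℂ) * Complex.I) := by
  set u := Complex.exp (2 * (θ₁ : ℂ) * Complex.I) with hu_def
  set v := Complex.exp (2 * (θ₂ : ℂ) * Complex.I) with hv_def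
  set w := Complex.exp (2 * (θ₃ : ℂ) * Complex.I) with hw_def
  have conj_exp : ∀ θ : ℝ,
      (starRingEnd ℂ) (Complex.exp (2 * (θ : ℂ) * Complex.I)) *
        Complex.exp (2 * (θ : ℂ) * Complex.I) = 1 := by
    intro θ
    rw [← Complex.exp_conj, ← Complex.exp_add]
    have : (starRingEnd ℂ) (2 * (θ : ℂ) * Complex.I) = -(2 * (θ : ℂ) * Complex.I) := by
      simp only [map_mul, map_ofNat, Complex.conj_ofReal, Complex.conj_I]; ring
    rw [this]
    simp
  have hu : (starRingEnd ℂ) u * u = 1 := conj_exp θ₁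
  have hv : (starRingEnd ℂ) v * v = 1 := conj_exp θ₂
  have hw : (starRingEnd ℂ) w * w = 1 := conj_exp θ₃
  have hconj := congrArg (starRingEnd ℂ) h
  simp only [map_add, map_mul, Complex.conj_ofReal, map_zero] at hconj
  -- second polynomial relation: multiply conjugated relation by u*v*w
  have h2 : ((ρ₂ - ρ₁ : ℝ) : ℂ) * v * w + ((ρ₃ - ρ₂ : ℝ) : ℂ) * u * w
      + ((ρ₁ - ρ₃ : ℝ) : ℂ) * u * v = 0 := by
    push_cast at hconj ⊢
    linear_combination (u * v * w) * hconj
      - (((ρ₂ : ℂ) - ρ₁) * v * w) * hu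
      - (((ρ₃ : ℂ) - ρ₂) * u * w) * hv
      - (((ρ₁ : ℂ) - ρ₃) * u * v) * hw
  have ha : ((ρ₂ : ℂ) - ρ₁) ≠ 0 := by
    simpa [sub_eq_zero] using fun hx => h12 (by exact_mod_cast hx.symm)
  have hb : ((ρ₃ : ℂ) - ρ₂) ≠ 0 := by
    simpa [sub_eq_zero] using fun hx => h23 (by exact_mod_cast hx.symm)
  have hc : ((ρ₃ : ℂ) - ρ₁) ≠ 0 := by
    simpa [sub_eq_zero] using fun hx => h31 (by exact_mod_cast hx)
  have key : ((ρ₂ : ℂ) - ρ₁) * ((ρ₃ : ℂ) - ρ₂) * (u - v) ^ 2 = 0 := by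
    push_cast at h h2
    linear_combination (((ρ₂ : ℂ) - ρ₁) * v + ((ρ₃ : ℂ) - ρ₂) * u) * h
      + (((ρ₃ : ℂ) - ρ₁)) * h2
  have huv : u = v := by
    have := mul_eq_zero.mp key
    rcases this with h' | h'
    · exact absurd (mul_eq_zero.mp h') (by simp [ha, hb])
    · have h'' := pow_eq_zero_iff (n := 2) (by norm_num) |>.mp h'
      exact sub_eq_zero.mp h''
  have huw : u = w := by
    have key2 : ((ρ₃ : ℂ) - ρ₁) * (u - w) = 0 := by
      push_cast at h
      linear_combination h + ((ρ₃ : ℂ) - ρ₂) * huv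
    rcases mul_eq_zero.mp key2 with h' | h'
    · exact absurd h' hc
    · exact sub_eq_zero.mp h'
  exact ⟨huv, huv ▸ huw⟩
end

section
/- Let 0 ≤ α < 1 be a real number. For each integer j ≥ 1 define P_j : [0,∞) → ℝ by P_j(t) = ((1−α)t + α)^{j−1} / ((1−α)t + 1)^{j+1}. Then P_j(0) = α^{j−1} for every j ≥ 1, and for every t ≥ 0 and every j ≥ 1 the derivative satisfies d P_j/dt (t) = (j+1)·P_{j+1}(t) + (j−1)·P_{j−1}(t) − 2j·P_j(t), where for j = 1 the term (j−1)·P_{j−1}(t) is zero. -/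
noncomputable def zhangWalkSol (α : ℝ) (j : ℕ) (t : ℝ) : ℝ :=
  ((1 - α) * t + α) ^ (j - 1) / ((1 - α) * t + 1) ^ (j + 1)

/-!
Write `u = (1-α)t + α` and `v = (1-α)t + 1`, so that `P_j = u^{j-1} / v^{j+1}` and
`u' = v' = 1 - α = v - u`. Differentiating gives `P_{k+1}' = (1-α)/v · (k P_k - (k+2) P_{k+1})`,
and the recurrence `v P_{j+1} = u P_j` (for `j ≥ 1`) turns this into the stated system.
-/

theorem zhangWalkSol_apply_zero (α : ℝ) (j : ℕ) : zhangWalkSol α j 0 = α ^ (j - 1) := by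
  simp [zhangWalkSol]

theorem zhangWalkSol_succ_mul (α t : ℝ) {j : ℕ} (hj : j ≠ 0) :
    ((1 - α) * t + 1) * zhangWalkSol α (j + 1) t = ((1 - α) * t + α) * zhangWalkSol α j t := by
  obtain ⟨k, rfl⟩ := Nat.exists_eq_add_one_of_ne_zero hj
  rcases eq_or_ne ((1 - α) * t + 1) 0 with hv | hv
  · simp [zhangWalkSol, hv]
  · simp only [zhangWalkSol, Nat.add_sub_cancel]
    field_simp
    ring

theorem hasDerivAt_zhangWalkSol_succ {α t : ℝ} (hv : (1 - α) * t + 1 ≠ 0) (k : ℕ) :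
    HasDerivAt (zhangWalkSol α (k + 1))
      ((1 - α) / ((1 - α) * t + 1) *
        (k * zhangWalkSol α k t - (k + 2) * zhangWalkSol α (k + 1) t)) t := by
  have hu : HasDerivAt (fun s ↦ (1 - α) * s + α) (1 - α) t := by
    simpa using ((hasDerivAt_id t).const_mul (1 - α)).add_const α
  have hw : HasDerivAt (fun s ↦ (1 - α) * s + 1) (1 - α) t := by
    simpa using ((hasDerivAt_id t).const_mul (1 - α)).add_const 1
  show HasDerivAt (fun s ↦ ((1 - α) * s + α) ^ k / ((1 - α) * s + 1) ^ (k + 2)) _ t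
  refine ((hu.pow k).div (hw.pow (k + 2)) (pow_ne_zero _ hv)).congr_deriv ?_
  simp only [zhangWalkSol, Pi.pow_apply]
  push_cast
  field_simp
  ring

theorem zhangWalkSol_solves_system_general (α : ℝ) (h1 : α < 1) :
    (∀ j : ℕ, 1 ≤ j → zhangWalkSol α j 0 = α ^ (j - 1)) ∧
    (∀ j : ℕ, 1 ≤ j → ∀ t : ℝ, 0 ≤ t →
      HasDerivWithinAt (zhangWalkSol α j)
        (((j : ℝ) + 1) * zhangWalkSol α (j + 1) t
          + ((j : ℝ) - 1) * zhangWalkSol α (j - 1) t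
          - 2 * (j : ℝ) * zhangWalkSol α j t)
        (Set.Ici 0) t) := by
  refine ⟨fun j _ ↦ zhangWalkSol_apply_zero α j, fun j hj t ht ↦ ?_⟩
  obtain ⟨k, rfl⟩ := Nat.exists_eq_add_of_le' hj
  have hv : (1 - α) * t + 1 ≠ 0 := by nlinarith
  have hnext := zhangWalkSol_succ_mul α t (Nat.add_one_ne_zero k)
  have hcur : (k : ℝ) * (((1 - α) * t + 1) * zhangWalkSol α (k + 1) t)
      = k * (((1 - α) * t + α) * zhangWalkSol α k t) := by
    rcases Nat.eq_zero_or_pos k with rfl | hk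
    · simp
    · rw [zhangWalkSol_succ_mul α t hk.ne']
  refine (hasDerivAt_zhangWalkSol_succ hv k).hasDerivWithinAt.congr_deriv ?_
  simp only [Nat.add_sub_cancel]
  push_cast
  rw [div_mul_eq_mul_div, div_eq_iff hv]
  linear_combination hcur - (k + 2) * hnext

/-- For `0 ≤ α < 1`, the functions `P_j(t) = ((1−α)t+α)^{j−1}/((1−α)t+1)^{j+1}`
on `[0,∞)` satisfy `P_j(0) = α^{j−1}` and the system of ODEs
`dP_j/dt = (j+1)P_{j+1} + (j−1)P_{j−1} − 2j·P_j` for all `j ≥ 1` and `t ≥ 0`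
(where for `j = 1` the coefficient `j − 1` vanishes). -/
theorem zhangWalkSol_solves_system (α : ℝ) (h0 : 0 ≤ α) (h1 : α < 1) :
    (∀ j : ℕ, 1 ≤ j → zhangWalkSol α j 0 = α ^ (j - 1)) ∧
    (∀ j : ℕ, 1 ≤ j → ∀ t : ℝ, 0 ≤ t →
      HasDerivWithinAt (zhangWalkSol α j)
        (((j : ℝ) + 1) * zhangWalkSol α (j + 1) t
          + ((j : ℝ) - 1) * zhangWalkSol α (j - 1) t
          - 2 * (j : ℝ) * zhangWalkSol α j t)
        (Set.Ici 0) t) :=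
  zhangWalkSol_solves_system_general α h1
end

section
/- Let n ≥ 1 be an integer. For j ≥ 1 and t ≥ 0 define φ_j(α,t) = ((1−α)t + α)^{j−1} / ((1−α)t + 1)^{j+1} as a function of α in a neighborhood of 0, and set P_j(t) = (1/(n−1)!) · (d^{n−1}/dα^{n−1}) φ_j(α,t) evaluated at α = 0. Then P_j(0) = 1 if j = n and P_j(0) = 0 if j ≠ n, and for every t ≥ 0 and every j ≥ 1, d P_j/dt (t) = (j+1)·P_{j+1}(t) + (j−1)·P_{j−1}(t) − 2j·P_j(t), where for j = 1 the term (j−1)·P_{j−1}(t) is zero. -/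
/-!
For fixed `α`, `t ↦ φ_j(α, t)` already solves the system: with `u = (1 - α)t + α` and
`w = (1 - α)t + 1`, both `u` and `w` have `t`-derivative `1 - α = w - u`, which turns the quotient
rule for `u^(j-1) / w^(j+1)` into `(j+1)φ_{j+1} + (j-1)φ_{j-1} - 2jφ_j`. Since `φ_j` is smooth in
`(α, t)` wherever `w ≠ 0`, symmetry of mixed partials lets `∂_t` commute with `∂_α^(n-1)`, and the
system, being linear, passes to `P_j`. At `t = 0`, `φ_j(α, 0) = α^(j-1)`, whose `(n-1)`-st Taylor
coefficient at `0` is `δ_{j,n}`.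
-/

open Filter Topology
open scoped ContDiff

/-- `P_j(t) = (1/(n−1)!) · ∂^{n−1}/∂α^{n−1} [ ((1−α)t+α)^{j−1}/((1−α)t+1)^{j+1} ]`
evaluated at `α = 0`. -/
noncomputable def zhangWalkDeltaSol (n j : ℕ) (t : ℝ) : ℝ :=
  (1 / (Nat.factorial (n - 1) : ℝ)) *
    iteratedDeriv (n - 1)
      (fun α : ℝ => ((1 - α) * t + α) ^ (j - 1) / ((1 - α) * t + 1) ^ (j + 1)) 0

section SliceDerivatives

variable {E F : Type*} [NormedAddCommGroup E] [NormedSpace ℝ E]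
  [NormedAddCommGroup F] [NormedSpace ℝ F]

theorem DifferentiableAt.hasDerivAt_slice_fst {f : ℝ × ℝ → F} {α s : ℝ}
    (hf : DifferentiableAt ℝ f (α, s)) :
    HasDerivAt (fun β => f (β, s)) (fderiv ℝ f (α, s) (1, 0)) α :=
  hf.hasFDerivAt.comp_hasDerivAt α ((hasDerivAt_id α).prodMk (hasDerivAt_const α s))

theorem DifferentiableAt.hasDerivAt_slice_snd {f : ℝ × ℝ → F} {α s : ℝ}
    (hf : DifferentiableAt ℝ f (α, s)) :
    HasDerivAt (fun u => f (α, u)) (fderiv ℝ f (α, s) (0, 1)) s :=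
  hf.hasFDerivAt.comp_hasDerivAt s ((hasDerivAt_const s α).prodMk (hasDerivAt_id s))

theorem ContDiffAt.fderiv_fderiv_apply_comm {f : E → F} {p : E} (hf : ContDiffAt ℝ 2 f p)
    (v w : E) :
    fderiv ℝ (fun q => fderiv ℝ f q v) p w = fderiv ℝ (fun q => fderiv ℝ f q w) p v := by
  have hdf : DifferentiableAt ℝ (fderiv ℝ f) p :=
    (hf.fderiv_right (m := 1) (by norm_num)).differentiableAt one_ne_zero
  rw [fderiv_clm_apply hdf (differentiableAt_const v),
    fderiv_clm_apply hdf (differentiableAt_const w)]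
  simpa using hf.isSymmSndFDerivAt (by simp) w v

variable {U : Set (ℝ × ℝ)} {f : ℝ × ℝ → F}

theorem IsOpen.eventually_mem_slice_fst (hU : IsOpen U) {x s : ℝ} (h : (x, s) ∈ U) :
    ∀ᶠ α in 𝓝 x, (α, s) ∈ U :=
  ((Continuous.prodMk_left s).tendsto x).eventually (hU.eventually_mem h)

theorem IsOpen.eventually_mem_slice_snd (hU : IsOpen U) {x s : ℝ} (h : (x, s) ∈ U) :
    ∀ᶠ u in 𝓝 s, (x, u) ∈ U :=
  ((Continuous.prodMk_right x).tendsto s).eventually (hU.eventually_mem h)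

theorem iteratedDeriv_succ_slice_fst (hU : IsOpen U) (hf : DifferentiableOn ℝ f U) (m : ℕ)
    {x s : ℝ} (hxs : (x, s) ∈ U) :
    iteratedDeriv (m + 1) (fun α => f (α, s)) x
      = iteratedDeriv m (fun α => fderiv ℝ f (α, s) (1, 0)) x := by
  rw [iteratedDeriv_succ']
  refine EventuallyEq.iteratedDeriv_eq m ?_
  filter_upwards [hU.eventually_mem_slice_fst hxs] with α hα
  exact (hf.differentiableAt (hU.mem_nhds hα)).hasDerivAt_slice_fst.deriv

theorem hasDerivAt_iteratedDeriv_slice_fst (m : ℕ) (hU : IsOpen U)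
    (hf : ContDiffOn ℝ ∞ f U) {x t : ℝ} (hxt : (x, t) ∈ U) :
    HasDerivAt (fun s => iteratedDeriv m (fun α => f (α, s)) x)
      (iteratedDeriv m (fun α => fderiv ℝ f (α, t) (0, 1)) x) t := by
  induction m generalizing f with
  | zero =>
    simpa using ((hf.differentiableOn (by simp)).differentiableAt
      (hU.mem_nhds hxt)).hasDerivAt_slice_snd
  | succ m ih =>
    have hdf : ContDiffOn ℝ ∞ (fderiv ℝ f) U := hf.fderiv_of_isOpen hU (by simp)
    have hdf_apply (v : ℝ × ℝ) : ContDiffOn ℝ ∞ (fun q => fderiv ℝ f q v) U :=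
      hdf.clm_apply contDiffOn_const
    have hmixed : iteratedDeriv (m + 1) (fun α => fderiv ℝ f (α, t) (0, 1)) x
        = iteratedDeriv m
            (fun α => fderiv ℝ (fun q => fderiv ℝ f q (1, 0)) (α, t) (0, 1)) x := by
      rw [iteratedDeriv_succ_slice_fst hU ((hdf_apply _).differentiableOn (by simp)) m hxt]
      refine EventuallyEq.iteratedDeriv_eq m ?_
      filter_upwards [hU.eventually_mem_slice_fst hxt] with α hα
      exact ((hf.contDiffAt (hU.mem_nhds hα)).of_le
        (WithTop.coe_le_coe.2 le_top)).fderiv_fderiv_apply_comm _ _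
    rw [hmixed]
    refine (ih (hdf_apply _)).congr_of_eventuallyEq ?_
    filter_upwards [hU.eventually_mem_slice_snd hxt] with s hs
    exact iteratedDeriv_succ_slice_fst hU (hf.differentiableOn (by simp)) m hs

theorem hasDerivAt_iteratedDeriv_slice_fst_of_hasDerivAt (m : ℕ) (hU : IsOpen U)
    (hf : ContDiffOn ℝ ∞ f U) {g : ℝ × ℝ → F}
    (hg : ∀ p ∈ U, HasDerivAt (fun s => f (p.1, s)) (g p) p.2) {x t : ℝ}
    (hxt : (x, t) ∈ U) :
    HasDerivAt (fun s => iteratedDeriv m (fun α => f (α, s)) x)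
      (iteratedDeriv m (fun α => g (α, t)) x) t := by
  convert hasDerivAt_iteratedDeriv_slice_fst m hU hf hxt using 1
  refine EventuallyEq.iteratedDeriv_eq m ?_
  filter_upwards [hU.eventually_mem_slice_fst hxt] with α hα
  exact (hg _ hα).unique
    ((hf.differentiableOn (by simp)).differentiableAt (hU.mem_nhds hα)).hasDerivAt_slice_snd

end SliceDerivatives

/-- `φ_j(α, t)` with `p = (α, t)`. -/
noncomputable def zhangPhi (j : ℕ) (p : ℝ × ℝ) : ℝ :=
  ((1 - p.1) * p.2 + p.1) ^ (j - 1) / ((1 - p.1) * p.2 + 1) ^ (j + 1)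

def zhangGenerator (P : ℕ → ℝ) (j : ℕ) : ℝ :=
  ((j : ℝ) + 1) * P (j + 1) + ((j : ℝ) - 1) * P (j - 1) - 2 * (j : ℝ) * P j

theorem iteratedDeriv_zhangGenerator {P : ℕ → ℝ → ℝ} {m : ℕ} {x : ℝ}
    (hP : ∀ k, ContDiffAt ℝ m (P k) x) (j : ℕ) :
    iteratedDeriv m (fun α => zhangGenerator (fun k => P k α) j) x
      = zhangGenerator (fun k => iteratedDeriv m (P k) x) j := by
  have hP' (k : ℕ) (c : ℝ) : ContDiffAt ℝ m (fun α => c * P k α) x :=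
    contDiffAt_const.mul (hP k)
  simp only [zhangGenerator]
  rw [iteratedDeriv_fun_sub ((hP' _ _).add (hP' _ _)) (hP' _ _),
    iteratedDeriv_fun_add (hP' _ _) (hP' _ _), iteratedDeriv_const_mul_field,
    iteratedDeriv_const_mul_field, iteratedDeriv_const_mul_field]

theorem contDiffOn_zhangPhi (j : ℕ) :
    ContDiffOn ℝ ∞ (zhangPhi j) {p : ℝ × ℝ | (1 - p.1) * p.2 + 1 ≠ 0} :=
  ContDiffOn.div (by fun_prop) (by fun_prop) fun _ hp => pow_ne_zero _ hp

theorem hasDerivAt_zhangPhi_snd {j : ℕ} (hj : 1 ≤ j) {α t : ℝ}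
    (ht : (1 - α) * t + 1 ≠ 0) :
    HasDerivAt (fun s => zhangPhi j (α, s))
      (zhangGenerator (fun k => zhangPhi k (α, t)) j) t := by
  have hlin (c : ℝ) : HasDerivAt (fun s => (1 - α) * s + c) (1 - α) t := by
    simpa using ((hasDerivAt_id t).const_mul (1 - α)).add_const c
  obtain ⟨k, rfl⟩ : ∃ k, j = k + 1 := ⟨j - 1, by omega⟩
  have hquot := ((hlin α).fun_pow k).fun_div ((hlin 1).fun_pow (k + 2)) (pow_ne_zero _ ht)
  refine hquot.congr_deriv ?_
  simp only [zhangPhi, zhangGenerator]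
  rcases k with _ | k
  · field_simp
    ring
  · simp only [Nat.add_sub_cancel, show k + 1 + 1 - 1 = k + 1 by omega]
    push_cast
    field_simp
    ring

theorem zhangWalkDeltaSol_eq_zhangPhi (n j : ℕ) :
    zhangWalkDeltaSol n j
      = fun t => (1 / (Nat.factorial (n - 1) : ℝ)) *
          iteratedDeriv (n - 1) (fun α => zhangPhi j (α, t)) 0 :=
  rfl

theorem zhangWalkDeltaSol_zero {n j : ℕ} (hn : 1 ≤ n) (hj : 1 ≤ j) :
    zhangWalkDeltaSol n j 0 = if j = n then 1 else 0 := by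
  have hφ : (fun α : ℝ => ((1 - α) * 0 + α) ^ (j - 1) / ((1 - α) * 0 + 1) ^ (j + 1))
      = (· ^ (j - 1)) := by
    funext α
    simp
  rw [zhangWalkDeltaSol, hφ, iteratedDeriv_fun_pow_zero]
  by_cases h : j = n
  · subst h
    simp [Nat.factorial_ne_zero]
  · simp [h, show n - 1 ≠ j - 1 by omega]

theorem hasDerivAt_zhangWalkDeltaSol (n : ℕ) {j : ℕ} (hj : 1 ≤ j) {t : ℝ} (ht : t ≠ -1) :
    HasDerivAt (zhangWalkDeltaSol n j)
      (zhangGenerator (fun k => zhangWalkDeltaSol n k t) j) t := by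
  set U : Set (ℝ × ℝ) := {p | (1 - p.1) * p.2 + 1 ≠ 0}
  have hU : IsOpen U := isOpen_ne_fun (by fun_prop) continuous_const
  have h0t : ((0 : ℝ), t) ∈ U := by
    simpa [U, add_eq_zero_iff_eq_neg] using ht
  have hslice (k : ℕ) : ContDiffAt ℝ (n - 1) (fun α => zhangPhi k (α, t)) 0 :=
    (((contDiffOn_zhangPhi k).contDiffAt (hU.mem_nhds h0t)).comp 0
      (contDiffAt_id.prodMk contDiffAt_const)).of_le (WithTop.coe_le_coe.2 le_top)
  have hφ := hasDerivAt_iteratedDeriv_slice_fst_of_hasDerivAt (n - 1) hU (contDiffOn_zhangPhi j)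
    (fun p hp => hasDerivAt_zhangPhi_snd hj hp) h0t
  rw [iteratedDeriv_zhangGenerator hslice] at hφ
  refine (hφ.const_mul (1 / (Nat.factorial (n - 1) : ℝ))).congr_deriv ?_
  simp only [zhangWalkDeltaSol_eq_zhangPhi, zhangGenerator]
  ring

/-- For `n ≥ 1`, the functions obtained by differentiating the family
`φ_j(α,t) = ((1−α)t+α)^{j−1}/((1−α)t+1)^{j+1}` `(n−1)` times in `α` at `α = 0`
(normalized by `(n−1)!`) satisfy the Kronecker-delta initial condition
`P_j(0) = δ_{j,n}` and solve the ODE system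
`dP_j/dt = (j+1)P_{j+1} + (j−1)P_{j−1} − 2j·P_j` for `j ≥ 1`, `t ≥ 0`
(the coefficient `j − 1` vanishing for `j = 1`). -/
theorem zhangWalkDeltaSol_solves_system (n : ℕ) (hn : 1 ≤ n) :
    (∀ j : ℕ, 1 ≤ j → zhangWalkDeltaSol n j 0 = if j = n then 1 else 0) ∧
    (∀ j : ℕ, 1 ≤ j → ∀ t : ℝ, 0 ≤ t →
      HasDerivWithinAt (zhangWalkDeltaSol n j)
        (((j : ℝ) + 1) * zhangWalkDeltaSol n (j + 1) t
          + ((j : ℝ) - 1) * zhangWalkDeltaSol n (j - 1) t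
          - 2 * (j : ℝ) * zhangWalkDeltaSol n j t)
        (Set.Ici 0) t) :=
  ⟨fun _ hj => zhangWalkDeltaSol_zero hn hj,
    fun _ hj _ ht => (hasDerivAt_zhangWalkDeltaSol n hj (by linarith)).hasDerivWithinAt⟩
end
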